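/- Let μ₄, μ₅, μ₆, μ₇ ∈ ℂ be pairwise distinct with each μⱼ ∉ {0,1}. The projective algebraic set Ŝ_μ ⊂ ℙ⁶(ℂ) defined by the five equations x₁² + x₂² + x₃² = 0, μ₄x₁² + x₂² + x₄² = 0, μ₅x₁² + x₂² + x₅² = 0, μ₆x₁² + x₂² + x₆² = 0, μ₇x₁² + x₂² + x₇² = 0 is smooth: at every point of Ŝ_μ (viewed in ℂ⁷ ∖ {0}) the 5×7 Jacobian matrix of the defining polynomials has rank 5. -/

import Mathlib

/-!
Subtracting two of the defining equations gives `(ν i - ν k) * x 0 ^ 2 = x (k+2) ^ 2 - x (i+2) ^ 2`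
(with `ν = ![1, μ₄, μ₅, μ₆, μ₇]` and `0`-based coordinates). Since the `ν i` are distinct, at a
nonzero point at most one of `x 2, …, x 6` vanishes, and if one does then `x 0 ≠ 0`. In the
Jacobian the columns `2, …, 6` form a diagonal block, so a linear relation among the rows can
only involve the row `i` with `x (i+2) = 0`; the column `0`, whose entry `2 * ν i * x 0` in that
row is nonzero, then forces it to vanish too.
-/

/-- The Jacobian matrix of the five quadrics defining `Ŝ_μ` at the point `x`,
where `ν = ![1, μ₄, μ₅, μ₆, μ₇]`: row `i` is the gradient of
`ν i · x₁² + x₂² + x_{i+3}²`. -/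
def jac (ν : Fin 5 → ℂ) (x : Fin 7 → ℂ) : Matrix (Fin 5) (Fin 7) ℂ :=
  Matrix.of fun i j =>
    if j = 0 then 2 * ν i * x 0
    else if j = 1 then 2 * x 1
    else if (j : ℕ) = (i : ℕ) + 2 then 2 * x j
    else 0

section Quadrics

variable {K : Type*} [Field K] {n : ℕ} {ν : Fin n → K} {x : Fin (n + 2) → K}

theorem eq_zero_of_apply_zero_eq_zero_of_apply_succ_succ_eq_zero
    (hS : ∀ i, ν i * x 0 ^ 2 + x 1 ^ 2 + x i.succ.succ ^ 2 = 0) {i : Fin n}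
    (h0 : x 0 = 0) (hi : x i.succ.succ = 0) : x = 0 := by
  have h1 : x 1 = 0 := pow_eq_zero_iff two_ne_zero |>.mp <| by
    linear_combination hS i - ν i * x 0 * h0 - x i.succ.succ * hi
  have hk (k : Fin n) : x k.succ.succ = 0 := pow_eq_zero_iff two_ne_zero |>.mp <| by
    linear_combination hS k - ν k * x 0 * h0 - x 1 * h1
  funext j
  induction j using Fin.cases with
  | zero => exact h0
  | succ j => induction j using Fin.cases with
    | zero => exact h1
    | succ k => exact hk k

theorem apply_zero_eq_zero_of_apply_succ_succ_eq_zero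
    (hS : ∀ i, ν i * x 0 ^ 2 + x 1 ^ 2 + x i.succ.succ ^ 2 = 0) {i k : Fin n}
    (hik : ν i ≠ ν k) (hi : x i.succ.succ = 0) (hk : x k.succ.succ = 0) : x 0 = 0 := by
  have : (ν i - ν k) * x 0 ^ 2 = 0 := by
    linear_combination hS i - hS k - x i.succ.succ * hi + x k.succ.succ * hk
  exact pow_eq_zero_iff two_ne_zero |>.mp <|
    (mul_eq_zero.mp this).resolve_left (sub_ne_zero.mpr hik)

theorem apply_zero_ne_zero_and_apply_succ_succ_ne_zero
    (hS : ∀ i, ν i * x 0 ^ 2 + x 1 ^ 2 + x i.succ.succ ^ 2 = 0) (hν : Function.Injective ν)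
    (hx : x ≠ 0) {i : Fin n} (hi : x i.succ.succ = 0) :
    x 0 ≠ 0 ∧ ∀ k ≠ i, x k.succ.succ ≠ 0 := by
  have h0 : x 0 ≠ 0 := fun h0 =>
    hx (eq_zero_of_apply_zero_eq_zero_of_apply_succ_succ_eq_zero hS h0 hi)
  exact ⟨h0, fun k hki hk =>
    h0 (apply_zero_eq_zero_of_apply_succ_succ_eq_zero hS (hν.ne hki) hk hi)⟩

end Quadrics

theorem jac_apply_zero (ν : Fin 5 → ℂ) (x : Fin 7 → ℂ) (i : Fin 5) :
    jac ν x i 0 = 2 * ν i * x 0 := by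
  simp [jac]

theorem jac_apply_succ_succ (ν : Fin 5 → ℂ) (x : Fin 7 → ℂ) (i k : Fin 5) :
    jac ν x i k.succ.succ = if k = i then 2 * x k.succ.succ else 0 := by
  simp only [jac, Matrix.of_apply, Fin.ext_iff, Fin.val_succ]
  simp

theorem linearIndependent_jac_row {ν : Fin 5 → ℂ} {x : Fin 7 → ℂ} (hν : ∀ i, ν i ≠ 0)
    (hx : ∀ i : Fin 5, x i.succ.succ = 0 → x 0 ≠ 0 ∧ ∀ k ≠ i, x k.succ.succ ≠ 0) :
    LinearIndependent ℂ (jac ν x).row := by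
  rw [Fintype.linearIndependent_iff]
  intro c hc
  have hcol (j : Fin 7) : ∑ i, c i * jac ν x i j = 0 := by
    simpa using congrFun hc j
  have hc_of_ne (k : Fin 5) (hk : x k.succ.succ ≠ 0) : c k = 0 := by
    have := hcol k.succ.succ
    simp only [jac_apply_succ_succ, mul_ite, mul_zero, Finset.sum_ite_eq, Finset.mem_univ,
      if_true] at this
    exact (mul_eq_zero.mp this).resolve_right (mul_ne_zero two_ne_zero hk)
  intro i
  by_cases hi : x i.succ.succ = 0
  · obtain ⟨h0, hk⟩ := hx i hi
    have := hcol 0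
    rw [Finset.sum_eq_single i (fun k _ hki => by rw [hc_of_ne k (hk k hki), zero_mul])
      (by simp), jac_apply_zero] at this
    exact (mul_eq_zero.mp this).resolve_right (by simp [hν i, h0])
  · exact hc_of_ne i hi

/-- The generalized Fermat curve `Ŝ_μ` of type `(2,6)` is smooth: at each nonzero
solution of the five defining quadrics the `5×7` Jacobian matrix has rank `5`. -/
theorem generalized_fermat_smooth (μ₄ μ₅ μ₆ μ₇ : ℂ)
    (h01 : ∀ μ ∈ ({μ₄, μ₅, μ₆, μ₇} : Set ℂ), μ ≠ 0 ∧ μ ≠ 1)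
    (hdist : μ₄ ≠ μ₅ ∧ μ₄ ≠ μ₆ ∧ μ₄ ≠ μ₇ ∧ μ₅ ≠ μ₆ ∧ μ₅ ≠ μ₇ ∧ μ₆ ≠ μ₇)
    (x : Fin 7 → ℂ) (hx : x ≠ 0)
    (h1 : x 0 ^ 2 + x 1 ^ 2 + x 2 ^ 2 = 0)
    (h2 : μ₄ * x 0 ^ 2 + x 1 ^ 2 + x 3 ^ 2 = 0)
    (h3 : μ₅ * x 0 ^ 2 + x 1 ^ 2 + x 4 ^ 2 = 0)
    (h4 : μ₆ * x 0 ^ 2 + x 1 ^ 2 + x 5 ^ 2 = 0)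
    (h5 : μ₇ * x 0 ^ 2 + x 1 ^ 2 + x 6 ^ 2 = 0) :
    (jac ![1, μ₄, μ₅, μ₆, μ₇] x).rank = 5 := by
  set ν : Fin 5 → ℂ := ![1, μ₄, μ₅, μ₆, μ₇]
  have hS (i : Fin 5) : ν i * x 0 ^ 2 + x 1 ^ 2 + x i.succ.succ ^ 2 = 0 := by
    fin_cases i <;> simpa [ν]
  obtain ⟨h40, h41⟩ := h01 μ₄ (by simp)
  obtain ⟨h50, h51⟩ := h01 μ₅ (by simp)
  obtain ⟨h60, h61⟩ := h01 μ₆ (by simp)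
  obtain ⟨h70, h71⟩ := h01 μ₇ (by simp)
  have hν0 (i : Fin 5) : ν i ≠ 0 := by
    fin_cases i <;> simp [ν, h40, h50, h60, h70]
  have hν : Function.Injective ν := by
    obtain ⟨hd45, hd46, hd47, hd56, hd57, hd67⟩ := hdist
    intro i j h
    fin_cases i <;> fin_cases j <;>
      simp [ν, eq_comm, h41, h51, h61, h71, hd45, hd46, hd47, hd56, hd57, hd67] at h ⊢
  simpa using (linearIndependent_jac_row hν0
    fun i hi => apply_zero_ne_zero_and_apply_succ_succ_ne_zero hS hν hx hi).rank_matrix
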